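/- Let P be a properly leveled irreducible nontrivial lattice polygon with four z-sticks z_{14}, z_{13}, z_{24}, z_{23} and level arcs P_1, P_2, P_3, P_4. Then the union P_2 ∪ P_3 of the two middle-level arcs contains at most eight sticks of x- or y-direction, and if it contains exactly eight, then each of P_1 and P_4 is a single stick. -/

import Mathlib

/-- Realification of an integer lattice point. -/
def toR (v : Fin 3 → ℤ) : Fin 3 → ℝ := fun i => (v i : ℝ)

/-- A closed lattice polygon in `ℤ³`: a cyclic sequence of vertices whose
consecutive differences (sticks) are nonzero, axis-parallel, consecutive
sticks are non-parallel, and distinct sticks meet only in shared endpoints. -/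
structure LatticePolygon where
  n : ℕ
  npos : 0 < n
  vert : ZMod n → (Fin 3 → ℤ)
  inj : Function.Injective vert
  axis : ∀ i : ZMod n, ∃ d : Fin 3,
    (vert (i + 1) - vert i) d ≠ 0 ∧ ∀ d' : Fin 3, d' ≠ d → (vert (i + 1) - vert i) d' = 0
  nonparallel : ∀ i : ZMod n, ∀ d : Fin 3,
    (vert (i + 1) - vert i) d = 0 ∨ (vert (i + 2) - vert (i + 1)) d = 0
  simple : ∀ i j : ZMod n, i ≠ j →
    segment ℝ (toR (vert i)) (toR (vert (i + 1))) ∩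
      segment ℝ (toR (vert j)) (toR (vert (j + 1))) ⊆
    {toR (vert i), toR (vert (i + 1))}

instance (P : LatticePolygon) : NeZero P.n := ⟨P.npos.ne'⟩

namespace LatticePolygon

/-- The displacement vector of the `i`-th stick. -/
def edgeVec (P : LatticePolygon) (i : ZMod P.n) : Fin 3 → ℤ :=
  P.vert (i + 1) - P.vert i

/-- The `i`-th stick is parallel to the `d`-th coordinate axis. -/
def IsDir (P : LatticePolygon) (i : ZMod P.n) (d : Fin 3) : Prop :=
  P.edgeVec i d ≠ 0

/-- The number of sticks of `P` parallel to the `d`-th coordinate axis. -/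
noncomputable def numSticks (P : LatticePolygon) (d : Fin 3) : ℕ :=
  Set.ncard {i : ZMod P.n | P.IsDir i d}

/-- The underlying point set of `P` in `ℝ³`. -/
def carrier (P : LatticePolygon) : Set (Fin 3 → ℝ) :=
  ⋃ i : ZMod P.n, segment ℝ (toR (P.vert i)) (toR (P.vert (i + 1)))

/-- `k` is a `d`-level of `P`: some stick not parallel to the `d`-th axis
lies in the hyperplane where the `d`-th coordinate equals `k`. -/
def IsLevel (P : LatticePolygon) (d : Fin 3) (k : ℤ) : Prop :=
  ∃ i : ZMod P.n, ¬ P.IsDir i d ∧ P.vert i d = k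

/-- The number of endpoints of `d`-sticks lying on the `d`-level `k`. -/
noncomputable def endpointCount (P : LatticePolygon) (d : Fin 3) (k : ℤ) : ℕ :=
  Set.ncard {i : ZMod P.n | P.IsDir i d ∧ P.vert i d = k} +
  Set.ncard {i : ZMod P.n | P.IsDir i d ∧ P.vert (i + 1) d = k}

/-- `P` is properly leveled: every level contains exactly two endpoints of
sticks of the corresponding direction. -/
def ProperlyLeveled (P : LatticePolygon) : Prop :=
  ∀ (d : Fin 3) (k : ℤ), P.IsLevel d k → P.endpointCount d k = 2

end LatticePolygon

/-- Two subsets of `ℝ³` are ambient isotopic. -/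
def AmbientIsotopic (K K' : Set (Fin 3 → ℝ)) : Prop :=
  ∃ H : ℝ → ((Fin 3 → ℝ) ≃ₜ (Fin 3 → ℝ)),
    Continuous (fun q : ℝ × (Fin 3 → ℝ) => H q.1 q.2) ∧
    H 0 = Homeomorph.refl (Fin 3 → ℝ) ∧
    (H 1) '' K = K'

/-- A standard round circle in a plane. -/
noncomputable def unknotCurve : ℝ → (Fin 3 → ℝ) :=
  fun t => ![Real.cos t, Real.sin t, 0]

/-- A standard parametrization of the trefoil knot `3₁`. -/
noncomputable def trefoilCurve : ℝ → (Fin 3 → ℝ) :=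
  fun t => ![Real.sin t + 2 * Real.sin (2 * t),
             Real.cos t - 2 * Real.cos (2 * t),
             - Real.sin (3 * t)]

/-- A standard parametrization of the figure-eight knot `4₁`. -/
noncomputable def figureEightCurve : ℝ → (Fin 3 → ℝ) :=
  fun t => ![(2 + Real.cos (2 * t)) * Real.cos (3 * t),
             (2 + Real.cos (2 * t)) * Real.sin (3 * t),
             Real.sin (4 * t)]

/-- `K` is a trivial knot. -/
def IsUnknot (K : Set (Fin 3 → ℝ)) : Prop :=
  AmbientIsotopic K (Set.range unknotCurve)

/-- `K` is a trefoil knot `3₁`. -/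
def IsTrefoil (K : Set (Fin 3 → ℝ)) : Prop :=
  AmbientIsotopic K (Set.range trefoilCurve)

/-- `K` is a figure-eight knot `4₁`. -/
def IsFigureEight (K : Set (Fin 3 → ℝ)) : Prop :=
  AmbientIsotopic K (Set.range figureEightCurve)

/-- A lattice polygon is irreducible if no ambient isotopic lattice polygon
has fewer sticks. -/
def LatticePolygon.Irreducible (P : LatticePolygon) : Prop :=
  ∀ Q : LatticePolygon, AmbientIsotopic Q.carrier P.carrier → P.n ≤ Q.n

/-- The lattice stick number of (the knot type of) a subset `K` of `ℝ³`. -/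
noncomputable def latticeStickNum (K : Set (Fin 3 → ℝ)) : ℕ :=
  sInf {m : ℕ | ∃ P : LatticePolygon, P.n = m ∧ AmbientIsotopic P.carrier K}

/-! The four `z`-levels partition the non-`z` sticks, and there are `|P| - 4 ≤ 10` of them. Each
level arc contains at least one stick, so the two middle arcs hold at most `10 - 2 = 8`, with
equality only when both boundary arcs are single sticks. -/

namespace LatticePolygon

variable (P : LatticePolygon) (d : Fin 3)

/-- The level arc at the `d`-level `k`; for `d = 2` and the `i`-th level this is the paper's `P_i`. -/
def levelSticks (k : ℤ) : Set (ZMod P.n) :=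
  {i | ¬ P.IsDir i d ∧ P.vert i d = k}

theorem ncard_levelSticks_pos {k : ℤ} (hk : P.IsLevel d k) : 0 < (P.levelSticks d k).ncard :=
  (Set.ncard_pos (Set.toFinite _)).2 hk

theorem disjoint_levelSticks {k k' : ℤ} (h : k ≠ k') :
    Disjoint (P.levelSticks d k) (P.levelSticks d k') :=
  Set.disjoint_left.2 fun _ hk hk' => h (hk.2.symm.trans hk'.2)

theorem levelSticks_union (k k' : ℤ) :
    P.levelSticks d k ∪ P.levelSticks d k' =
      {i | ¬ P.IsDir i d ∧ (P.vert i d = k ∨ P.vert i d = k')} := by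
  ext i
  simp only [levelSticks, Set.mem_union, Set.mem_ofPred_eq, and_or_left]

theorem numSticks_add_sum_ncard_levelSticks {L : Finset ℤ} (hL : {k | P.IsLevel d k} ⊆ L) :
    P.numSticks d + ∑ k ∈ L, (P.levelSticks d k).ncard = P.n := by
  classical
  have hfibers : ∑ k ∈ L, (P.levelSticks d k).ncard = {i | ¬ P.IsDir i d}.ncard := by
    simp only [Set.ncard_eq_toFinset_card']
    rw [Finset.card_eq_sum_card_fiberwise (f := fun i => P.vert i d) (t := L)]
    · refine Finset.sum_congr rfl fun k _ => congrArg Finset.card ?_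
      ext i
      rw [Set.mem_toFinset]
      simp [levelSticks]
    · intro i hi
      exact hL ⟨i, by simpa using hi, rfl⟩
  rw [hfibers, numSticks, ← Set.compl_ofPred, Set.ncard_add_ncard_compl, Nat.card_zmod]

end LatticePolygon

theorem middle_arcs_at_most_eight_sticks_general (P : LatticePolygon)
    (hz : P.numSticks 2 = 4) (hn : P.n ≤ 14)
    (k1 k2 k3 k4 : ℤ) (hk : k1 < k2 ∧ k2 < k3 ∧ k3 < k4)
    (hlev : {k : ℤ | P.IsLevel 2 k} = {k1, k2, k3, k4}) :
    Set.ncard {i : ZMod P.n |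
        ¬ P.IsDir i 2 ∧ (P.vert i 2 = k2 ∨ P.vert i 2 = k3)} ≤ 8 ∧
    (Set.ncard {i : ZMod P.n |
        ¬ P.IsDir i 2 ∧ (P.vert i 2 = k2 ∨ P.vert i 2 = k3)} = 8 →
      Set.ncard {i : ZMod P.n | ¬ P.IsDir i 2 ∧ P.vert i 2 = k1} = 1 ∧
      Set.ncard {i : ZMod P.n | ¬ P.IsDir i 2 ∧ P.vert i 2 = k4} = 1) := by
  obtain ⟨h12, h23, h34⟩ := hk
  have hsum := P.numSticks_add_sum_ncard_levelSticks 2 (L := {k1, k2, k3, k4})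
    (by rw [hlev]; simp)
  rw [hz, Finset.sum_insert (by simp; omega), Finset.sum_insert (by simp; omega),
    Finset.sum_pair h34.ne] at hsum
  have hpos : ∀ k ∈ ({k1, k2, k3, k4} : Set ℤ), 0 < (P.levelSticks 2 k).ncard :=
    fun k hk => P.ncard_levelSticks_pos 2 (hlev.symm.subset hk)
  have h1 := hpos k1 (by simp)
  have h4 := hpos k4 (by simp)
  rw [← P.levelSticks_union, Set.ncard_union_eq (P.disjoint_levelSticks 2 h23.ne)]
  change _ ∧ (_ → (P.levelSticks 2 k1).ncard = 1 ∧ (P.levelSticks 2 k4).ncard = 1)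
  omega

/-- In a properly leveled irreducible nontrivial lattice polygon
with four `z`-sticks, at most 14 sticks in total and `z`-levels
`k1 < k2 < k3 < k4`, the union `P₂ ∪ P₃` of the two middle-level arcs contains
at most eight `x`- or `y`-sticks, and if it contains exactly eight then each of
the boundary arcs `P₁` and `P₄` is a single stick. -/
theorem middle_arcs_at_most_eight_sticks (P : LatticePolygon)
    (hpl : P.ProperlyLeveled) (hirr : P.Irreducible)
    (hnt : ¬ IsUnknot P.carrier) (hz : P.numSticks 2 = 4) (hn : P.n ≤ 14)
    (k1 k2 k3 k4 : ℤ) (hk : k1 < k2 ∧ k2 < k3 ∧ k3 < k4)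
    (hlev : {k : ℤ | P.IsLevel 2 k} = {k1, k2, k3, k4}) :
    Set.ncard {i : ZMod P.n |
        ¬ P.IsDir i 2 ∧ (P.vert i 2 = k2 ∨ P.vert i 2 = k3)} ≤ 8 ∧
    (Set.ncard {i : ZMod P.n |
        ¬ P.IsDir i 2 ∧ (P.vert i 2 = k2 ∨ P.vert i 2 = k3)} = 8 →
      Set.ncard {i : ZMod P.n | ¬ P.IsDir i 2 ∧ P.vert i 2 = k1} = 1 ∧
      Set.ncard {i : ZMod P.n | ¬ P.IsDir i 2 ∧ P.vert i 2 = k4} = 1) :=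
  middle_arcs_at_most_eight_sticks_general P hz hn k1 k2 k3 k4 hk hlev
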